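/- Let f : ℝ^n → ℝ ∪ {+∞} be a lower semicontinuous function and ȳ ∈ J(f). Then the limiting subdifferential of f at (∞, ȳ) satisfies: ∂f(∞, ȳ) equals the set of all u ∈ ℝ^n for which there exist sequences x_k with ‖x_k‖ → ∞ and f(x_k) → ȳ, and u_k ∈ ∂f(x_k) with u_k → u. -/

import Mathlib

open Filter Topology Set Metric Pointwise
open scoped RealInnerProductSpace ENNReal

noncomputable section

variable {E F G : Type*}
  [NormedAddCommGroup E] [InnerProductSpace ℝ E]
  [NormedAddCommGroup F] [InnerProductSpace ℝ F]
  [NormedAddCommGroup G] [InnerProductSpace ℝ G]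

/-- The regular (Fréchet) normal cone to a subset of a product of inner product
spaces, at a point `p` (empty if `p ∉ Ω`). -/
def frechetNormalCone2 (Ω : Set (E × F)) (p : E × F) : Set (E × F) :=
  {ξ | p ∈ Ω ∧ ∀ ε > (0:ℝ), ∀ᶠ q in nhdsWithin p Ω,
      ⟪ξ.1, q.1 - p.1⟫ + ⟪ξ.2, q.2 - p.2⟫ ≤ ε * ‖q - p‖}

/-- The limiting (Mordukhovich) normal cone. -/
def limitingNormalCone2 (Ω : Set (E × F)) (p : E × F) : Set (E × F) :=
  {ξ | ∃ pk : ℕ → E × F, ∃ ξk : ℕ → E × F,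
    (∀ k, pk k ∈ Ω) ∧ Tendsto pk atTop (𝓝 p) ∧
    (∀ k, ξk k ∈ frechetNormalCone2 Ω (pk k)) ∧ Tendsto ξk atTop (𝓝 ξ)}

/-- The normal cone to `Ω ⊆ E × F` at `(∞, ȳ)`. -/
def normalConeAtInfty (Ω : Set (E × F)) (ybar : F) : Set (E × F) :=
  {ξ | ∃ pk : ℕ → E × F, ∃ ξk : ℕ → E × F,
    (∀ k, pk k ∈ Ω) ∧ Tendsto (fun k => ‖(pk k).1‖) atTop atTop ∧
    Tendsto (fun k => (pk k).2) atTop (𝓝 ybar) ∧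
    (∀ k, ξk k ∈ frechetNormalCone2 Ω (pk k)) ∧ Tendsto ξk atTop (𝓝 ξ)}

/-- `Ω ⊆ E × F` is locally closed at `(∞, ȳ)`. -/
def LocallyClosedAtInfty (Ω : Set (E × F)) (ybar : F) : Prop :=
  ∃ R > (0:ℝ), ∃ V ∈ 𝓝 ybar, IsClosed V ∧
    IsClosed (Ω ∩ {p : E × F | R ≤ ‖p.1‖ ∧ p.2 ∈ V})

/-- Graph of a set-valued mapping. -/
def svGraph (S : E → Set F) : Set (E × F) := {p | p.2 ∈ S p.1}

/-- Jelonek set of a set-valued mapping. -/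
def jelonek (S : E → Set F) : Set F :=
  {y | ∃ xk : ℕ → E, ∃ yk : ℕ → F,
    Tendsto (fun k => ‖xk k‖) atTop atTop ∧ (∀ k, yk k ∈ S (xk k)) ∧
    Tendsto yk atTop (𝓝 y)}

/-- Coderivative of a set-valued mapping at a point of its graph. -/
def coderiv (S : E → Set F) (x : E) (y : F) (v : F) : Set E :=
  {u | (u, -v) ∈ limitingNormalCone2 (svGraph S) (x, y)}

/-- Coderivative of a set-valued mapping at `(∞, ȳ)`. -/
def coderivAtInfty (S : E → Set F) (ybar : F) (v : F) : Set E :=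
  {u | (u, -v) ∈ normalConeAtInfty (svGraph S) ybar}

/-- Regular normal cone, one-space version. -/
def frechetNormalCone1 (Ω : Set E) (x : E) : Set E :=
  {ξ | x ∈ Ω ∧ ∀ ε > (0:ℝ), ∀ᶠ x' in nhdsWithin x Ω, ⟪ξ, x' - x⟫ ≤ ε * ‖x' - x‖}

/-- Normal cone at infinity to an unbounded subset of `E`. -/
def normalConeAtInfty1 (Ω : Set E) : Set E :=
  {ξ | ∃ xk : ℕ → E, ∃ ξk : ℕ → E, (∀ k, xk k ∈ Ω) ∧
    Tendsto (fun k => ‖xk k‖) atTop atTop ∧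
    (∀ k, ξk k ∈ frechetNormalCone1 Ω (xk k)) ∧ Tendsto ξk atTop (𝓝 ξ)}

/-- Epigraph of an extended-real-valued function. -/
def epiSet (f : E → EReal) : Set (E × ℝ) := {p | f p.1 ≤ (p.2 : EReal)}

/-- Graph of an extended-real-valued function, as a subset of `E × ℝ`. -/
def gphFun (f : E → EReal) : Set (E × ℝ) := {p | f p.1 = (p.2 : EReal)}

/-- Jelonek set of a function. -/
def jelonekFun (f : E → EReal) : Set ℝ :=
  {y | ∃ xk : ℕ → E, Tendsto (fun k => ‖xk k‖) atTop atTop ∧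
    Tendsto (fun k => f (xk k)) atTop (𝓝 (y : EReal))}

/-- Limiting subdifferential of `f` at `x` (empty outside `dom f`). -/
def limSubdiff (f : E → EReal) (x : E) : Set E :=
  {u | ∃ r : ℝ, f x = (r : EReal) ∧
    (u, (-1 : ℝ)) ∈ limitingNormalCone2 (epiSet f) (x, r)}

/-- Limiting subdifferential of `f` at `(∞, ȳ)`. -/
def limSubdiffAtInfty (f : E → EReal) (ybar : ℝ) : Set E :=
  {u | (u, (-1 : ℝ)) ∈ normalConeAtInfty (epiSet f) ybar}

/-- Singular subdifferential of `f` at `(∞, ȳ)`. -/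
def singSubdiffAtInfty (f : E → EReal) (ybar : ℝ) : Set E :=
  {u | (u, (0 : ℝ)) ∈ normalConeAtInfty (epiSet f) ybar}

/-- Inverse of a set-valued mapping. -/
def svInv (S : E → Set F) (y : F) : Set E := {x | y ∈ S x}

/-- Preimage `F⁻¹(V) = {x : F(x) ∩ V ≠ ∅}`. -/
def svPreimage (S : E → Set F) (V : Set F) : Set E := {x | (S x ∩ V).Nonempty}

/-- Distance function of a set-valued mapping, with value `+∞` on empty values. -/
def dSV (S : E → Set F) (p : E × F) : EReal :=
  ((EMetric.infEdist p.2 (S p.1) : ℝ≥0∞) : EReal)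

/-- Regular normal cone on `(E × F) × ℝ`. -/
def frechetNormalCone3 (Ω : Set ((E × F) × ℝ)) (p : (E × F) × ℝ) : Set ((E × F) × ℝ) :=
  {ξ | p ∈ Ω ∧ ∀ ε > (0:ℝ), ∀ᶠ q in nhdsWithin p Ω,
      ⟪ξ.1.1, q.1.1 - p.1.1⟫ + ⟪ξ.1.2, q.1.2 - p.1.2⟫ + ξ.2 * (q.2 - p.2)
        ≤ ε * ‖q - p‖}

/-- Limiting normal cone on `(E × F) × ℝ`. -/
def limitingNormalCone3 (Ω : Set ((E × F) × ℝ)) (p : (E × F) × ℝ) : Set ((E × F) × ℝ) :=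
  {ξ | ∃ pk ξk : ℕ → (E × F) × ℝ, (∀ k, pk k ∈ Ω) ∧ Tendsto pk atTop (𝓝 p) ∧
    (∀ k, ξk k ∈ frechetNormalCone3 Ω (pk k)) ∧ Tendsto ξk atTop (𝓝 ξ)}

/-- Limiting subdifferential of the distance function `d_F`. -/
def limSubdiffD (S : E → Set F) (p : E × F) : Set (E × F) :=
  {w | ∃ r : ℝ, dSV S p = (r : EReal) ∧
    (w, (-1 : ℝ)) ∈ limitingNormalCone3 {q : (E × F) × ℝ | dSV S q.1 ≤ (q.2 : EReal)} (p, r)}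

/-- The set `J⁺(F₁ + F₂, y)`. -/
def jplus (S₁ S₂ : E → Set F) (y : F) : Set (F × F) :=
  {q | ∃ xk : ℕ → E, ∃ y1k y2k : ℕ → F,
    Tendsto (fun k => ‖xk k‖) atTop atTop ∧
    (∀ k, y1k k ∈ S₁ (xk k)) ∧ (∀ k, y2k k ∈ S₂ (xk k)) ∧
    Tendsto y1k atTop (𝓝 q.1) ∧ Tendsto y2k atTop (𝓝 q.2) ∧ q.1 + q.2 = y}

/-- The set `J°(F₂ ∘ F₁, y)`. -/
def jcirc (S₁ : E → Set G) (S₂ : G → Set F) (y : F) : Set G :=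
  {z | ∃ xk : ℕ → E, ∃ zk : ℕ → G, ∃ yk : ℕ → F,
    Tendsto (fun k => ‖xk k‖) atTop atTop ∧ (∀ k, zk k ∈ S₁ (xk k)) ∧
    (∀ k, yk k ∈ S₂ (zk k)) ∧ Tendsto zk atTop (𝓝 z) ∧ Tendsto yk atTop (𝓝 y)}

/-- Composition `F₂ ∘ F₁` of set-valued mappings. -/
def svComp (S₂ : G → Set F) (S₁ : E → Set G) (x : E) : Set F :=
  {y | ∃ z ∈ S₁ x, y ∈ S₂ z}

abbrev Eucl (n : ℕ) := EuclideanSpace ℝ (Fin n)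

/-!
A Fréchet normal `(v, -λ)` with `λ > 0` to the epigraph of `f` can only occur at a point
`(x, f x)` of the graph: below a strict epigraph point the vertical downward direction stays in
the epigraph, and it pairs positively with `(v, -λ)`. Rescaling by `λ⁻¹` then turns Fréchet
normals to the epigraph at points escaping to infinity into subgradients, which gives `⊆`.
For `⊇`, a diagonal argument replaces each limiting normal `(u_k, -1)` at `(x_k, f x_k)` by a
nearby Fréchet normal at a nearby epigraph point.
-/

lemma inner_le_zero_of_mem_frechetNormalCone2 {Ω : Set (E × F)} {p ξ v : E × F}
    (h : ξ ∈ frechetNormalCone2 Ω p) (hv : ∀ᶠ t in 𝓝[>] (0:ℝ), p + t • v ∈ Ω) :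
    ⟪ξ.1, v.1⟫ + ⟪ξ.2, v.2⟫ ≤ 0 := by
  by_contra! ha
  have hv0 : 0 < ‖v‖ := norm_pos_iff.2 fun hv0 => by simp [hv0] at ha
  have hpath : Tendsto (fun t : ℝ => p + t • v) (𝓝[>] 0) (𝓝[Ω] p) := by
    refine tendsto_nhdsWithin_iff.2 ⟨?_, hv⟩
    have : Tendsto (fun t : ℝ => p + t • v) (𝓝 0) (𝓝 (p + (0:ℝ) • v)) :=
      (continuous_const.add (continuous_id.smul continuous_const)).tendsto 0
    simpa using this.mono_left nhdsWithin_le_nhds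
  obtain ⟨t, ht, hpos⟩ := ((hpath.eventually (h.2 _ (half_pos (div_pos ha hv0)))).and
    self_mem_nhdsWithin).exists
  simp only [Prod.fst_add, Prod.snd_add, Prod.smul_fst, Prod.smul_snd, add_sub_cancel_left,
    inner_smul_right, norm_smul, Real.norm_of_nonneg (le_of_lt hpos)] at ht
  have hε : (⟪ξ.1, v.1⟫ + ⟪ξ.2, v.2⟫) / ‖v‖ / 2 * (t * ‖v‖) =
      t * (⟪ξ.1, v.1⟫ + ⟪ξ.2, v.2⟫) / 2 := by
    field_simp
  rw [← mul_add, hε] at ht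
  nlinarith [show (0:ℝ) < t from hpos]

lemma epiSet_eq_of_mem_frechetNormalCone2 {f : E → EReal} {p ξ : E × ℝ}
    (h : ξ ∈ frechetNormalCone2 (epiSet f) p) (hξ : ξ.2 < 0) : f p.1 = p.2 := by
  refine h.1.eq_of_not_lt fun hlt => ?_
  have hdown : ∀ᶠ t in 𝓝[>] (0:ℝ), p + t • ((0 : E), (-1 : ℝ)) ∈ epiSet f := by
    have : Tendsto (fun t : ℝ => ((p.2 - t : ℝ) : EReal)) (𝓝 0) (𝓝 (p.2 : EReal)) :=
      EReal.tendsto_coe.2 (by simpa using tendsto_const_nhds.sub (tendsto_id (x := 𝓝 (0:ℝ))))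
    filter_upwards [nhdsWithin_le_nhds (this.eventually_const_lt hlt)] with t ht
    simpa [epiSet, sub_eq_add_neg] using ht.le
  have hvert := inner_le_zero_of_mem_frechetNormalCone2 h hdown
  simp only [inner_zero_right, RCLike.inner_apply, Real.ringHom_apply, neg_mul, one_mul, zero_add,
    Left.neg_nonpos_iff] at hvert
  linarith

lemma smul_mem_frechetNormalCone2 {Ω : Set (E × F)} {p ξ : E × F}
    (h : ξ ∈ frechetNormalCone2 Ω p) {c : ℝ} (hc : 0 < c) :
    c • ξ ∈ frechetNormalCone2 Ω p := by
  refine ⟨h.1, fun ε hε => ?_⟩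
  filter_upwards [h.2 (ε / c) (div_pos hε hc)] with q hq
  calc ⟪(c • ξ).1, q.1 - p.1⟫ + ⟪(c • ξ).2, q.2 - p.2⟫
      = c * (⟪ξ.1, q.1 - p.1⟫ + ⟪ξ.2, q.2 - p.2⟫) := by
        simp only [Prod.smul_fst, Prod.smul_snd, real_inner_smul_left, mul_add]
    _ ≤ c * (ε / c * ‖q - p‖) := mul_le_mul_of_nonneg_left hq hc.le
    _ = ε * ‖q - p‖ := by field_simp

lemma frechetNormalCone2_subset_limitingNormalCone2 (Ω : Set (E × F)) (p : E × F) :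
    frechetNormalCone2 Ω p ⊆ limitingNormalCone2 Ω p := fun ξ h =>
  ⟨fun _ => p, fun _ => ξ, fun _ => h.1, tendsto_const_nhds, fun _ => h, tendsto_const_nhds⟩

lemma mem_limSubdiff_of_mem_frechetNormalCone2_epiSet {f : E → EReal} {p ξ : E × ℝ}
    (h : ξ ∈ frechetNormalCone2 (epiSet f) p) (hξ : ξ.2 < 0) :
    (-ξ.2)⁻¹ • ξ.1 ∈ limSubdiff f p.1 := by
  refine ⟨p.2, epiSet_eq_of_mem_frechetNormalCone2 h hξ,
    frechetNormalCone2_subset_limitingNormalCone2 _ _ ?_⟩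
  have hscaled : (-ξ.2)⁻¹ • ξ = ((-ξ.2)⁻¹ • ξ.1, (-1 : ℝ)) := by
    ext
    · rfl
    · simp only [Prod.smul_snd, smul_eq_mul, inv_neg, neg_mul, inv_mul_cancel₀ hξ.ne]
  simpa only [hscaled] using smul_mem_frechetNormalCone2 h (inv_pos.2 (neg_pos.2 hξ))

lemma mem_normalConeAtInfty_of_mem_limitingNormalCone2 {Ω : Set (E × F)} {ybar : F}
    {pk ξk : ℕ → E × F} {ξ : E × F} (hnorm : Tendsto (fun k => ‖(pk k).1‖) atTop atTop)
    (hy : Tendsto (fun k => (pk k).2) atTop (𝓝 ybar))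
    (hξk : ∀ k, ξk k ∈ limitingNormalCone2 Ω (pk k)) (hξ : Tendsto ξk atTop (𝓝 ξ)) :
    ξ ∈ normalConeAtInfty Ω ybar := by
  have hclose : ∀ k : ℕ, ∃ q η, q ∈ Ω ∧ η ∈ frechetNormalCone2 Ω q ∧
      dist (pk k) q < 1 / (k + 1) ∧ dist (ξk k) η < 1 / (k + 1) := by
    intro k
    obtain ⟨qj, ηj, hqΩ, hq, hη, hηξ⟩ := hξk k
    have hr : (0 : ℝ) < 1 / (k + 1) := by positivity
    obtain ⟨j, hqj, hηj⟩ :=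
      ((hq.eventually (ball_mem_nhds _ hr)).and (hηξ.eventually (ball_mem_nhds _ hr))).exists
    exact ⟨qj j, ηj j, hqΩ j, hη j, mem_ball'.1 hqj, mem_ball'.1 hηj⟩
  choose q η hqΩ hη hdq hdη using hclose
  have hsmall (a : ℕ → ℝ) (ha : ∀ k : ℕ, a k < 1 / (k + 1)) (ha0 : ∀ k, 0 ≤ a k) :
      Tendsto a atTop (𝓝 0) :=
    squeeze_zero ha0 (fun k => (ha k).le) tendsto_one_div_add_atTop_nhds_zero_nat
  have hq : Tendsto (fun k => dist (pk k) (q k)) atTop (𝓝 0) :=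
    hsmall _ hdq fun _ => dist_nonneg
  refine ⟨q, η, hqΩ, ?_, ?_, hη, hξ.congr_dist (hsmall _ hdη fun _ => dist_nonneg)⟩
  · have hgap : Tendsto (fun k => ‖(q k).1‖ - ‖(pk k).1‖) atTop (𝓝 0) := by
      refine squeeze_zero_norm (fun k => ?_) hq
      calc ‖‖(q k).1‖ - ‖(pk k).1‖‖ ≤ ‖(q k).1 - (pk k).1‖ :=
            abs_norm_sub_norm_le _ _
        _ = dist (pk k).1 (q k).1 := by rw [dist_comm, dist_eq_norm]
        _ ≤ dist (pk k) (q k) := le_max_left _ _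
    simpa using hnorm.atTop_add hgap
  · exact hy.congr_dist (squeeze_zero (fun _ => dist_nonneg) (fun k => le_max_right _ _) hq)

lemma exists_tendsto_of_mem_limSubdiffAtInfty {f : E → EReal} {ybar : ℝ} {u : E}
    (hu : u ∈ limSubdiffAtInfty f ybar) :
    ∃ xk uk : ℕ → E, Tendsto (fun k => ‖xk k‖) atTop atTop ∧
      Tendsto (fun k => f (xk k)) atTop (𝓝 (ybar : EReal)) ∧
      (∀ k, uk k ∈ limSubdiff f (xk k)) ∧ Tendsto uk atTop (𝓝 u) := by
  obtain ⟨pk, ξk, -, hnorm, hy, hfre, hξ⟩ := hu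
  have hsnd : Tendsto (fun k => (ξk k).2) atTop (𝓝 (-1)) := (continuous_snd.tendsto _).comp hξ
  obtain ⟨N, hN⟩ := eventually_atTop.1 (hsnd.eventually_lt_const (by norm_num : (-1 : ℝ) < 0))
  have hshift := tendsto_add_atTop_nat N
  have hneg (k : ℕ) : (ξk (k + N)).2 < 0 := hN _ (Nat.le_add_left N k)
  refine ⟨fun k => (pk (k + N)).1, fun k => (-(ξk (k + N)).2)⁻¹ • (ξk (k + N)).1,
    hnorm.comp hshift, ?_, fun k => mem_limSubdiff_of_mem_frechetNormalCone2_epiSet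
      (hfre (k + N)) (hneg k), ?_⟩
  · refine (EReal.tendsto_coe.2 (hy.comp hshift)).congr fun k => ?_
    exact (epiSet_eq_of_mem_frechetNormalCone2 (hfre (k + N)) (hneg k)).symm
  · have hscale : Tendsto (fun k => (-(ξk (k + N)).2)⁻¹) atTop (𝓝 1) := by
      simpa using ((hsnd.comp hshift).neg.inv₀ (by norm_num))
    simpa using hscale.smul (((continuous_fst.tendsto _).comp hξ).comp hshift)

theorem stmt6_general {n : ℕ} (f : Eucl n → EReal)
    (ybar : ℝ) :
    limSubdiffAtInfty f ybar =
      {u | ∃ xk : ℕ → Eucl n, ∃ uk : ℕ → Eucl n,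
        Tendsto (fun k => ‖xk k‖) atTop atTop ∧
        Tendsto (fun k => f (xk k)) atTop (𝓝 (ybar : EReal)) ∧
        (∀ k, uk k ∈ limSubdiff f (xk k)) ∧ Tendsto uk atTop (𝓝 u)} := by
  ext u
  refine ⟨exists_tendsto_of_mem_limSubdiffAtInfty, ?_⟩
  rintro ⟨xk, uk, hnorm, hf, hsub, hu⟩
  choose rk hrk hlim using hsub
  have hr : Tendsto rk atTop (𝓝 ybar) := EReal.tendsto_coe.1 (hf.congr hrk)
  exact mem_normalConeAtInfty_of_mem_limitingNormalCone2 (pk := fun k => (xk k, rk k))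
    hnorm hr hlim (hu.prodMk_nhds tendsto_const_nhds)

/-- The limiting subdifferential at infinity is the outer limit of
limiting subdifferentials. -/
theorem stmt6 {n : ℕ} (f : Eucl n → EReal)
    (hlsc : LowerSemicontinuous f) (hbot : ∀ x, f x ≠ ⊥)
    (ybar : ℝ) (hJ : ybar ∈ jelonekFun f) :
    limSubdiffAtInfty f ybar =
      {u | ∃ xk : ℕ → Eucl n, ∃ uk : ℕ → Eucl n,
        Tendsto (fun k => ‖xk k‖) atTop atTop ∧
        Tendsto (fun k => f (xk k)) atTop (𝓝 (ybar : EReal)) ∧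
        (∀ k, uk k ∈ limSubdiff f (xk k)) ∧ Tendsto uk atTop (𝓝 u)} :=
  stmt6_general f ybar
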